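/- Let A and B be finite nonempty sets and S ⊆ A × B. Choose a₁,…,a_k uniformly and independently from A and b₁,…,b_k uniformly and independently from B. Then with probability at least 1 − 4·e^{−δ²k/2}, the empirical frequency Prob_{i,j}[(a_i,b_j) ∈ S] (over uniform i,j ∈ {1,…,k}) differs from |S|/(|A|·|B|) by less than δ. -/

import Mathlib

/-!
Write `q a = 𝔼 b, 1[(a, b) ∈ S]` for the density of `S` in the row of `a`, and, for a sample
`a₁, …, a_k`, `r b = 𝔼 i, 1[(a_i, b) ∈ S]`. The empirical frequency is the sample mean
`𝔼 j, r b_j`, the mean of `r` over `B` is the sample mean `𝔼 i, q a_i`, and the mean of `q` is the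
density of `S`. Hoeffding's inequality, applied once to `q` and once to `r` (for each fixed
sample of `a`'s), puts each of the two differences below `δ / 2` outside a fraction
`2 e^{-δ²k/2}` of the samples.
-/

open MeasureTheory ProbabilityTheory Finset Real
open scoped BigOperators

section UniformOn

variable {Ω : Type*} [Fintype Ω] [MeasurableSpace Ω] [MeasurableSingletonClass Ω]

lemma measureReal_uniformOn_univ_finset (s : Finset Ω) :
    (uniformOn (Set.univ : Set Ω)).real s = #s / Fintype.card Ω := by
  simp [measureReal_def, uniformOn_univ, ENNReal.toReal_div]

lemma integral_uniformOn_univ (h : Ω → ℝ) : ∫ ω, h ω ∂uniformOn Set.univ = 𝔼 ω, h ω := by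
  rw [integral_fintype .of_finite, Fintype.expect_eq_sum_div_card, sum_div]
  refine sum_congr rfl fun ω _ => ?_
  rw [← coe_singleton, measureReal_uniformOn_univ_finset, card_singleton, smul_eq_mul]
  ring

end UniformOn

section Hoeffding

variable {Ω : Type*} [Fintype Ω] [Nonempty Ω]

theorem card_expect_sub_expect_ge_le (h : Ω → ℝ) (hh : ∀ ω, h ω ∈ Set.Icc 0 1) {k : ℕ}
    (hk : 0 < k) {t : ℝ} (ht : 0 ≤ t) :
    (#{f : Fin k → Ω | t ≤ 𝔼 i, h (f i) - 𝔼 ω, h ω} : ℝ) ≤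
      Fintype.card Ω ^ k * exp (-2 * k * t ^ 2) := by
  let _ : MeasurableSpace Ω := ⊤
  have : DiscreteMeasurableSpace Ω := ⟨fun _ => trivial⟩
  set μ₀ : Measure Ω := uniformOn Set.univ
  set μ : Measure (Fin k → Ω) := Measure.pi fun _ => μ₀
  have hμ : μ = uniformOn Set.univ := by rw [← Set.pi_univ, uniformOn_pi]
  set c : NNReal := (‖(1 : ℝ) - 0‖₊ / 2) ^ 2
  have hsubG : HasSubgaussianMGF (fun ω => h ω - 𝔼 ω, h ω) c μ₀ := by
    have := hasSubgaussianMGF_of_mem_Icc (μ := μ₀) Measurable.of_discrete.aemeasurable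
      (ae_of_all _ hh)
    rwa [integral_uniformOn_univ] at this
  have hsubG_pi (i : Fin k) :
      HasSubgaussianMGF (fun f : Fin k → Ω => h (f i) - 𝔼 ω, h ω) c μ := by
    refine HasSubgaussianMGF.of_map (Y := fun f : Fin k → Ω => f i)
      (X := fun ω : Ω => h ω - 𝔼 ω, h ω) (measurable_pi_apply i).aemeasurable ?_
    rwa [(measurePreserving_eval (fun _ : Fin k => μ₀) i).map_eq]
  have hindep : iIndepFun (fun i (f : Fin k → Ω) => h (f i) - 𝔼 ω, h ω) μ :=
    iIndepFun_pi (Ω := fun _ => Ω) (X := fun _ (ω : Ω) => h ω - 𝔼 ω, h ω)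
      fun _ => Measurable.of_discrete.aemeasurable
  have hoeffding := HasSubgaussianMGF.measure_sum_ge_le_of_iIndepFun hindep (s := univ)
    (fun i _ => hsubG_pi i) (ε := k * t) (by positivity)
  have hset : {f : Fin k → Ω | (k : ℝ) * t ≤ ∑ i, (h (f i) - 𝔼 ω, h ω)} =
      ↑({f : Fin k → Ω | t ≤ 𝔼 i, h (f i) - 𝔼 ω, h ω} : Finset _) := by
    ext f
    simp only [Set.mem_ofPred_eq, coe_filter, mem_univ, true_and, sum_sub_distrib,
      ← Fintype.card_mul_expect, card_univ, Fintype.card_fin, sum_const, nsmul_eq_mul]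
    rw [← mul_sub, mul_le_mul_iff_right₀ (by positivity)]
  have hc : ((∑ _i : Fin k, c : NNReal) : ℝ) = k / 4 := by norm_num [c, div_eq_mul_inv]
  rw [hμ, hset, measureReal_uniformOn_univ_finset, div_le_iff₀ (by positivity), hc,
    Fintype.card_fun, Fintype.card_fin, Nat.cast_pow, mul_comm] at hoeffding
  refine hoeffding.trans_eq ?_
  congr 2
  field_simp
  ring

theorem card_abs_expect_sub_expect_ge_le (h : Ω → ℝ) (hh : ∀ ω, h ω ∈ Set.Icc 0 1) {k : ℕ}
    (hk : 0 < k) {t : ℝ} (ht : 0 ≤ t) :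
    (#{f : Fin k → Ω | t ≤ |𝔼 i, h (f i) - 𝔼 ω, h ω|} : ℝ) ≤
      2 * Fintype.card Ω ^ k * exp (-2 * k * t ^ 2) := by
  classical
  have : Nonempty (Fin k) := ⟨⟨0, hk⟩⟩
  have hflip (f : Fin k → Ω) :
      𝔼 i, (1 - h (f i)) - 𝔼 ω, (1 - h ω) = -(𝔼 i, h (f i) - 𝔼 ω, h ω) := by
    simp only [expect_sub_distrib, Fintype.expect_const]
    ring
  have hupper := card_expect_sub_expect_ge_le h hh hk ht
  have hlower := card_expect_sub_expect_ge_le (fun ω => 1 - h ω)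
    (fun ω => ⟨by linarith [(hh ω).2], by linarith [(hh ω).1]⟩) hk ht
  simp only [hflip] at hlower
  calc (#{f : Fin k → Ω | t ≤ |𝔼 i, h (f i) - 𝔼 ω, h ω|} : ℝ)
      ≤ #{f : Fin k → Ω | t ≤ 𝔼 i, h (f i) - 𝔼 ω, h ω} +
          #{f : Fin k → Ω | t ≤ -(𝔼 i, h (f i) - 𝔼 ω, h ω)} := by
        simp only [le_abs, filter_or]
        exact_mod_cast card_union_le _ _
    _ ≤ _ := by linarith

end Hoeffding

lemma expect_mem_Icc {ι : Type*} [Fintype ι] [Nonempty ι] {f : ι → ℝ} {a b : ℝ}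
    (hf : ∀ i, f i ∈ Set.Icc a b) : 𝔼 i, f i ∈ Set.Icc a b :=
  ⟨le_expect univ_nonempty fun i _ => (hf i).1, expect_le univ_nonempty fun i _ => (hf i).2⟩

lemma card_div_card_mul_card_eq_expect_expect {α β : Type*} [Fintype α] [Fintype β]
    [DecidableEq α] [DecidableEq β] (s : Finset (α × β)) :
    (#s : ℝ) / (Fintype.card α * Fintype.card β) = 𝔼 a, 𝔼 b, if (a, b) ∈ s then 1 else 0 := by
  rw [← expect_product' univ univ (fun a b => if (a, b) ∈ s then (1 : ℝ) else 0),
    Finset.expect_eq_sum_div_card, sum_boole]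
  simp

lemma card_filter_prod_le {α β : Type*} [Fintype α] [Fintype β] (P : α → β → Prop)
    [∀ a b, Decidable (P a b)] (Q : α → Prop) [DecidablePred Q] {y : ℝ} (hy : 0 ≤ y)
    (hP : ∀ a, ¬Q a → (#{b | P a b} : ℝ) ≤ y) :
    (#{p : α × β | P p.1 p.2} : ℝ) ≤ #{a | Q a} * Fintype.card β + Fintype.card α * y := by
  have hfiber : (#{p : α × β | P p.1 p.2} : ℝ) = ∑ a, (#{b | P a b} : ℝ) := by
    simp only [natCast_card_filter, Fintype.sum_prod_type]
  have hbound (a : α) : (#{b | P a b} : ℝ) ≤ if Q a then (Fintype.card β : ℝ) else y := by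
    split_ifs with ha
    · exact_mod_cast (card_filter_le _ _).trans_eq card_univ
    · exact hP a ha
  have hnotQ : (#{a | ¬Q a} : ℝ) ≤ Fintype.card α := by
    exact_mod_cast (card_filter_le _ _).trans_eq card_univ
  calc (#{p : α × β | P p.1 p.2} : ℝ) ≤ ∑ a, if Q a then (Fintype.card β : ℝ) else y := by
        rw [hfiber]
        exact sum_le_sum fun a _ => hbound a
    _ = #{a | Q a} * Fintype.card β + #{a | ¬Q a} * y := by
        rw [sum_ite, sum_const, sum_const, nsmul_eq_mul, nsmul_eq_mul]
    _ ≤ #{a | Q a} * Fintype.card β + Fintype.card α * y := by gcongr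

lemma one_sub_le_card_subtype_div_card {X : Type*} [Fintype X] [Nonempty X] (P : X → Prop)
    [DecidablePred P] {ε : ℝ} (h : (#{x | ¬P x} : ℝ) ≤ ε * Fintype.card X) :
    1 - ε ≤ (Nat.card {x // P x} : ℝ) / Fintype.card X := by
  have hX : (0 : ℝ) < Fintype.card X := by exact_mod_cast Fintype.card_pos
  have hsplit : (#{x | P x} : ℝ) + #{x | ¬P x} = Fintype.card X := by
    exact_mod_cast card_filter_add_card_filter_not (s := univ) P
  rw [Nat.card_eq_fintype_card, Fintype.card_subtype, le_div_iff₀ hX]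
  linarith

theorem card_abs_expect_expect_sub_ge_le {A B : Type*} [Fintype A] [Fintype B] [Nonempty A]
    [Nonempty B] (φ : A → B → ℝ) (hφ : ∀ a b, φ a b ∈ Set.Icc 0 1) {k : ℕ} (hk : 0 < k)
    {δ : ℝ} (hδ : 0 ≤ δ) :
    (#{p : (Fin k → A) × (Fin k → B) |
        δ ≤ |𝔼 i, 𝔼 j, φ (p.1 i) (p.2 j) - 𝔼 a, 𝔼 b, φ a b|} : ℝ) ≤
      4 * exp (-δ ^ 2 * k / 2) * Fintype.card ((Fin k → A) × (Fin k → B)) := by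
  have : Nonempty (Fin k) := ⟨⟨0, hk⟩⟩
  set q : A → ℝ := fun a => 𝔼 b, φ a b
  set r : (Fin k → A) → B → ℝ := fun f b => 𝔼 i, φ (f i) b
  have hexp : exp (-2 * k * (δ / 2) ^ 2) = exp (-δ ^ 2 * k / 2) := by
    congr 1
    ring
  have hcol := card_abs_expect_sub_expect_ge_le q (fun a => expect_mem_Icc (hφ a)) hk
    (t := δ / 2) (by positivity)
  have hrow (f : Fin k → A) :
      (#{g : Fin k → B | δ / 2 ≤ |𝔼 j, r f (g j) - 𝔼 i, q (f i)|} : ℝ) ≤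
        2 * Fintype.card B ^ k * exp (-δ ^ 2 * k / 2) := by
    rw [← expect_comm, ← hexp]
    exact card_abs_expect_sub_expect_ge_le (r f) (fun b => expect_mem_Icc fun i => hφ _ b) hk
      (by positivity)
  have hsample (f : Fin k → A) (g : Fin k → B) :
      𝔼 i, 𝔼 j, φ (f i) (g j) = 𝔼 j, r f (g j) := expect_comm _ _ _
  have htriangle (f : Fin k → A) (g : Fin k → B) (hf : ¬δ / 2 ≤ |𝔼 i, q (f i) - 𝔼 a, q a|)
      (hg : ¬δ / 2 ≤ |𝔼 j, r f (g j) - 𝔼 i, q (f i)|) : |𝔼 j, r f (g j) - 𝔼 a, q a| < δ := by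
    calc |𝔼 j, r f (g j) - 𝔼 a, q a|
        ≤ |𝔼 j, r f (g j) - 𝔼 i, q (f i)| + |𝔼 i, q (f i) - 𝔼 a, q a| := abs_sub_le _ _ _
      _ < δ := by linarith [not_le.1 hf, not_le.1 hg]
  refine (card_filter_prod_le
    (fun (f : Fin k → A) (g : Fin k → B) => δ ≤ |𝔼 i, 𝔼 j, φ (f i) (g j) - 𝔼 a, 𝔼 b, φ a b|)
    (fun f => δ / 2 ≤ |𝔼 i, q (f i) - 𝔼 a, q a|)
    (y := 2 * Fintype.card B ^ k * exp (-δ ^ 2 * k / 2)) (by positivity) fun f hf => ?_).trans ?_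
  · refine le_trans ?_ (hrow f)
    refine Nat.cast_le.2 (card_le_card (monotone_filter_right _ fun g _ hbad => ?_))
    rw [hsample] at hbad
    by_contra hg
    exact (htriangle f g hf hg).not_ge hbad
  · rw [hexp] at hcol
    simp only [Fintype.card_prod, Fintype.card_fun, Fintype.card_fin, Nat.cast_mul,
      Nat.cast_pow] at hcol ⊢
    have hB : (0 : ℝ) ≤ Fintype.card B ^ k := by positivity
    nlinarith [mul_le_mul_of_nonneg_right hcol hB]

/-- Double sampling lemma: for `S ⊆ A × B` and independent uniform samples
`a₁,…,a_k ∈ A`, `b₁,…,b_k ∈ B`, with probability at least `1 − 4e^{−δ²k/2}`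
the empirical frequency of `S` among the pairs `(a_i, b_j)` differs from
`|S|/(|A|·|B|)` by less than `δ`. -/
theorem double_sampling
    {A B : Type*} [Fintype A] [Fintype B] [DecidableEq A] [DecidableEq B]
    [Nonempty A] [Nonempty B]
    (S : Finset (A × B)) (δ : ℝ) (hδ : 0 < δ) (k : ℕ) (hk : 0 < k) :
    1 - 4 * Real.exp (-δ^2 * k / 2) ≤
      (Nat.card {fg : (Fin k → A) × (Fin k → B) //
          |((Finset.univ.filter fun ij : Fin k × Fin k =>
              (fg.1 ij.1, fg.2 ij.2) ∈ S).card : ℝ) / (k : ℝ)^2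
            - (S.card : ℝ) / ((Fintype.card A : ℝ) * Fintype.card B)| < δ} : ℝ)
        / (Fintype.card ((Fin k → A) × (Fin k → B)) : ℝ) := by
  set φ : A → B → ℝ := fun a b => if (a, b) ∈ S then 1 else 0
  have hφ (a : A) (b : B) : φ a b ∈ Set.Icc 0 1 := by
    simp only [φ]
    split_ifs <;> norm_num
  have hdensity := card_div_card_mul_card_eq_expect_expect S
  have hfrequency (f : Fin k → A) (g : Fin k → B) :
      (#{ij : Fin k × Fin k | (f ij.1, g ij.2) ∈ S} : ℝ) / (k : ℝ) ^ 2 =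
        𝔼 i, 𝔼 j, φ (f i) (g j) := by
    have := card_div_card_mul_card_eq_expect_expect {ij : Fin k × Fin k | (f ij.1, g ij.2) ∈ S}
    rw [Fintype.card_fin, ← sq] at this
    simpa [φ] using this
  apply one_sub_le_card_subtype_div_card
  refine le_of_eq_of_le ?_ (card_abs_expect_expect_sub_ge_le φ hφ hk hδ.le)
  congr 2
  ext p
  simp only [mem_filter, mem_univ, true_and, hfrequency, hdensity, not_lt]
  rfl
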